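/- arXiv:0903.1882 — 3 statements merged into one kernel-verified Lean document; each statement's English description precedes it below -/
import Mathlib

section
/- Let V be a real inner product space, N \geq 1, \Sigma = [\sigma_{k,i}] an N\times N real matrix, and \tilde{\gamma}_1,...,\tilde{\gamma}_N real numbers such that E = \Sigma - diag(\tilde{\gamma}) is diagonally stable, witnessed by a diagonal D = diag(d_1,...,d_N) with d_k > 0 and D E + E^T D \leq -2\alpha I_N for some \alpha > 0. Suppose y_1,...,y_N, w_1,...,w_N \in V satisfy \tilde{\gamma}_k \|y_k\|^2 \leq \langle y_k, u_k \rangle for each k, where u_k = w_k + \sum_{i=1}^N \sigma_{k,i} y_i. Then (\sum_k \|y_k\|^2)^{1/2} \leq (\max_k d_k / \alpha) (\sum_k \|w_k\|^2)^{1/2}. -/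
/-! Multiplying the `k`-th dissipation inequality by `d k` and summing gives
`∑ₖ dₖ ⟪yₖ, (E y)ₖ⟫ ≥ -∑ₖ dₖ ⟪yₖ, wₖ⟫`, and the left side is half the entrywise pairing of
`D E + Eᵀ D` with the Gram matrix of `y`. Both `-(D E + Eᵀ D) - 2α I` and the Gram matrix are
positive semidefinite, so by the Schur product theorem that pairing is at most `-2α ∑ₖ ‖yₖ‖²`.
Hence `α ∑ₖ ‖yₖ‖² ≤ ∑ₖ dₖ ⟪yₖ, wₖ⟫ ≤ (maxₖ dₖ) ‖y‖ ‖w‖` by Cauchy–Schwarz. -/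

open Matrix Finset
open scoped InnerProductSpace

section

variable {ι V : Type*} [Fintype ι] [NormedAddCommGroup V] [InnerProductSpace ℝ V]

theorem Matrix.PosSemidef.sum_mul_inner_nonneg {P : Matrix ι ι ℝ} (hP : P.PosSemidef)
    (y : ι → V) : 0 ≤ ∑ k, ∑ i, P k i * ⟪y k, y i⟫_ℝ := by
  simpa [dotProduct, mulVec, gram] using
    (hP.hadamard (posSemidef_gram ℝ y)).dotProduct_mulVec_nonneg fun _ => 1

theorem Matrix.IsSymm.sum_mul_inner_le {A : Matrix ι ι ℝ} (hA : A.IsSymm) {c : ℝ}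
    (h : ∀ z : ι → ℝ, z ⬝ᵥ (A *ᵥ z) ≤ c * ∑ k, z k ^ 2) (y : ι → V) :
    ∑ k, ∑ i, A k i * ⟪y k, y i⟫_ℝ ≤ c * ∑ k, ‖y k‖ ^ 2 := by
  classical
  have hP : (c • 1 - A).PosSemidef := by
    refine .of_dotProduct_mulVec_nonneg ?_ fun z => ?_
    · rw [isHermitian_iff_isSymm]
      exact (isSymm_one.smul c).sub hA
    · have hz : z ⬝ᵥ z = ∑ k, z k ^ 2 := by simp only [dotProduct, sq]
      simp only [star_trivial, sub_mulVec, smul_mulVec, one_mulVec, dotProduct_sub,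
        dotProduct_smul, smul_eq_mul, hz]
      linarith [h z]
  have := hP.sum_mul_inner_nonneg y
  simp only [Matrix.sub_apply, smul_apply, one_apply, sub_mul, sum_sub_distrib, smul_eq_mul,
    mul_ite, mul_one, mul_zero, ite_mul, zero_mul, sum_ite_eq, mem_univ, if_true,
    real_inner_self_eq_norm_sq, ← mul_sum] at this
  linarith

theorem Matrix.sum_mul_inner_diagonal_mul_add_transpose_mul_diagonal [DecidableEq ι]
    (d : ι → ℝ) (E : Matrix ι ι ℝ) (y : ι → V) :
    ∑ k, ∑ i, (diagonal d * E + Eᵀ * diagonal d) k i * ⟪y k, y i⟫_ℝ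
      = 2 * ∑ k, d k * ∑ i, E k i * ⟪y k, y i⟫_ℝ := by
  have hswap : ∑ k, ∑ i, (Eᵀ * diagonal d) k i * ⟪y k, y i⟫_ℝ
      = ∑ k, ∑ i, (diagonal d * E) k i * ⟪y k, y i⟫_ℝ := by
    rw [sum_comm]
    simp only [diagonal_mul, mul_diagonal, transpose_apply, real_inner_comm, mul_comm (E _ _)]
  simp only [Matrix.add_apply, add_mul, sum_add_distrib, hswap, diagonal_mul, mul_assoc,
    ← mul_sum]
  ring

theorem Matrix.sum_mul_sum_mul_inner_le_of_diagonal_stable [DecidableEq ι] {d : ι → ℝ}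
    {E : Matrix ι ι ℝ} {α : ℝ}
    (hE : ∀ z : ι → ℝ,
      z ⬝ᵥ ((diagonal d * E + Eᵀ * diagonal d) *ᵥ z) ≤ -2 * α * ∑ k, z k ^ 2)
    (y : ι → V) :
    ∑ k, d k * ∑ i, E k i * ⟪y k, y i⟫_ℝ ≤ -α * ∑ k, ‖y k‖ ^ 2 := by
  have hsymm : (diagonal d * E + Eᵀ * diagonal d).IsSymm := by
    simp only [IsSymm, transpose_add, transpose_mul, transpose_transpose, diagonal_transpose,
      add_comm]
  have := hsymm.sum_mul_inner_le hE y
  rw [sum_mul_inner_diagonal_mul_add_transpose_mul_diagonal] at this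
  linarith

theorem Matrix.sum_sub_diagonal_mul_inner [DecidableEq ι] (S : Matrix ι ι ℝ) (γ : ι → ℝ)
    (y : ι → V) (k : ι) :
    ∑ i, (S - diagonal γ) k i * ⟪y k, y i⟫_ℝ = ⟪y k, ∑ i, S k i • y i⟫_ℝ - γ k * ‖y k‖ ^ 2 := by
  simp only [Matrix.sub_apply, sub_mul, sum_sub_distrib, diagonal_apply, ite_mul, zero_mul,
    sum_ite_eq, mem_univ, if_true, real_inner_self_eq_norm_sq, inner_sum, real_inner_smul_right]

theorem sum_mul_inner_le_sup'_mul_sqrt_mul_sqrt [Nonempty ι] {d : ι → ℝ} (hd : ∀ k, 0 ≤ d k)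
    (y w : ι → V) :
    ∑ k, d k * ⟪y k, w k⟫_ℝ
      ≤ univ.sup' univ_nonempty d * (√(∑ k, ‖y k‖ ^ 2) * √(∑ k, ‖w k‖ ^ 2)) := by
  set m := univ.sup' univ_nonempty d
  have hm : ∀ k, d k ≤ m := fun k => le_sup' d (mem_univ k)
  calc ∑ k, d k * ⟪y k, w k⟫_ℝ ≤ ∑ k, m * (‖y k‖ * ‖w k‖) := by
        refine sum_le_sum fun k _ => ?_
        calc d k * ⟪y k, w k⟫_ℝ ≤ d k * (‖y k‖ * ‖w k‖) :=
              mul_le_mul_of_nonneg_left (real_inner_le_norm _ _) (hd k)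
          _ ≤ m * (‖y k‖ * ‖w k‖) := by gcongr; exact hm k
    _ ≤ m * (√(∑ k, ‖y k‖ ^ 2) * √(∑ k, ‖w k‖ ^ 2)) := by
        rw [← mul_sum]
        gcongr
        · exact (hd (Classical.arbitrary ι)).trans (hm _)
        · exact Real.sum_mul_le_sqrt_mul_sqrt _ _ _

end

theorem le_div_of_mul_sq_le_mul {a b x : ℝ} (ha : 0 < a) (hb : 0 ≤ b) (h : a * x ^ 2 ≤ x * b) :
    x ≤ b / a := by
  rw [le_div_iff₀ ha]
  rcases le_or_gt x 0 with hx | hx <;> nlinarith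

/-- **"Vidyasagar lemma" step.** If `E = Σ - diag(γ̃)` is diagonally
stable with witness `D = diag(d)`, `d > 0`, `D E + Eᵀ D ≤ -2α I`, and the vectors
`y_k, w_k` of a real inner product space satisfy the dissipation inequalities
`γ̃ₖ ‖y_k‖² ≤ ⟨y_k, u_k⟩` with `u_k = w_k + ∑ᵢ σ_{k,i} y_i`, then
`(∑ ‖y_k‖²)^{1/2} ≤ (maxₖ d_k / α) (∑ ‖w_k‖²)^{1/2}`. -/
theorem statement6 {V : Type*} [NormedAddCommGroup V] [InnerProductSpace ℝ V]
    {N : ℕ} [NeZero N] (S : Matrix (Fin N) (Fin N) ℝ) (γt d : Fin N → ℝ) (α : ℝ)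
    (hd : ∀ k, 0 < d k) (hα : 0 < α)
    (hE : ∀ z : Fin N → ℝ,
      z ⬝ᵥ ((Matrix.diagonal d * (S - Matrix.diagonal γt)
          + (S - Matrix.diagonal γt)ᵀ * Matrix.diagonal d) *ᵥ z)
        ≤ -2 * α * ∑ k, (z k) ^ 2)
    (y w : Fin N → V)
    (hpass : ∀ k, γt k * ‖y k‖ ^ 2 ≤ (inner ℝ (y k) (w k + ∑ i, S k i • y i) : ℝ)) :
    Real.sqrt (∑ k, ‖y k‖ ^ 2) ≤
      ((Finset.univ.sup' Finset.univ_nonempty d) / α) * Real.sqrt (∑ k, ‖w k‖ ^ 2) := by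
  have hrow : ∀ k, d k * -⟪y k, w k⟫_ℝ ≤ d k * ∑ i, (S - diagonal γt) k i * ⟪y k, y i⟫_ℝ := by
    intro k
    refine mul_le_mul_of_nonneg_left ?_ (hd k).le
    rw [sum_sub_diagonal_mul_inner]
    linarith [inner_add_right (𝕜 := ℝ) (y k) (w k) (∑ i, S k i • y i), hpass k]
  have henergy : α * ∑ k, ‖y k‖ ^ 2 ≤ ∑ k, d k * ⟪y k, w k⟫_ℝ := by
    have := (sum_le_sum fun k _ => hrow k).trans (sum_mul_sum_mul_inner_le_of_diagonal_stable hE y)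
    simp only [mul_neg, sum_neg_distrib] at this
    linarith
  have hcs := sum_mul_inner_le_sup'_mul_sqrt_mul_sqrt (fun k => (hd k).le) y w
  have hm : 0 ≤ univ.sup' univ_nonempty d :=
    (hd (Classical.arbitrary _)).le.trans (le_sup' d (mem_univ _))
  rw [div_mul_eq_mul_div]
  refine le_div_of_mul_sq_le_mul hα (mul_nonneg hm (Real.sqrt_nonneg _)) ?_
  rw [Real.sq_sqrt (sum_nonneg fun k _ => by positivity)]
  linarith
end

section
/- Let L be an n\times n Laplacian matrix (nonpositive off-diagonal entries, L 1_n = 0) that additionally satisfies 1_n^T L = 0, and let \lambda be its algebraic connectivity. Let h : \mathbb{R} \to \mathbb{R} be \xi-relaxed cocoercive with \xi > 0, and let x \in \mathbb{R}^n and y \in \mathbb{R}^n with y_i = h(x_i) for all i. Then y^T L x \geq \xi \lambda \|P y\|^2, where P = I_n - (1/n) 1_n 1_n^T. -/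
/-!
Write `w i j = -L i j`, nonnegative off the diagonal, and `y = h ∘ x`. Zero row sums give
`yᵀ L x = ∑ w i j y_i (x_i - x_j)`; with zero column sums also `2 yᵀ L y = ∑ w i j (y_i - y_j)²`.
Relaxed cocoercivity makes `h` monotone and `1/ξ`-Lipschitz, so on the finitely many points `x_i`
it is the derivative of a potential `Φ` obeying the descent inequality
`Φ a - Φ b + ξ/2 (h a - h b)² ≤ h a (a - b)`. Summed against the weights `w`, the `Φ` terms cancel
because the graph is balanced, leaving `ξ yᵀ L y ≤ yᵀ L x`. Finally `P y = y - c 1` with `L` killing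
`1` on both sides, so `yᵀ L y = (P y)ᵀ L (P y) ≥ λ ‖P y‖²` since `P y` sums to zero.
-/

open Matrix

/-- Algebraic connectivity of a (possibly non-symmetric) matrix `L`:
`min { zᵀ L z : zᵀ 1 = 0, ‖z‖ = 1 }`. -/
noncomputable def algConn {n : ℕ} (L : Matrix (Fin n) (Fin n) ℝ) : ℝ :=
  sInf {r : ℝ | ∃ z : Fin n → ℝ,
    (∑ i, z i) = 0 ∧ (∑ i, (z i) ^ 2) = 1 ∧ r = z ⬝ᵥ (L *ᵥ z)}

open Finset

def IsRelaxedCocoercive (ξ : ℝ) (h : ℝ → ℝ) : Prop :=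
  ∀ a b : ℝ, ξ * (h a - h b) ^ 2 ≤ (a - b) * (h a - h b)

namespace IsRelaxedCocoercive

variable {ξ : ℝ} {h : ℝ → ℝ}

theorem monotone (hh : IsRelaxedCocoercive ξ h) (hξ : 0 < ξ) : Monotone h := by
  intro a b hab
  by_contra! hlt
  nlinarith [hh b a, mul_pos hξ (mul_pos (sub_pos.2 hlt) (sub_pos.2 hlt)),
    mul_nonneg (sub_nonneg.2 hab) (sub_pos.2 hlt).le]

theorem mul_sub_le (hh : IsRelaxedCocoercive ξ h) (hξ : 0 < ξ) {a b : ℝ} (hab : a ≤ b) :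
    ξ * (h b - h a) ≤ b - a := by
  rcases (hh.monotone hξ hab).eq_or_lt with heq | hlt
  · simpa [heq] using hab
  · refine le_of_mul_le_mul_right ?_ (sub_pos.2 hlt)
    linarith [hh b a]

theorem exists_potential (hh : IsRelaxedCocoercive ξ h) (hξ : 0 < ξ) (S : Finset ℝ) :
    ∃ Φ : ℝ → ℝ, ∀ a ∈ S, ∀ b ∈ S,
      Φ a - Φ b + ξ / 2 * (h a - h b) ^ 2 ≤ h a * (a - b) := by
  induction S using Finset.induction_on_max with
  | empty => exact ⟨0, by simp⟩
  | insert m S hlt ih =>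
    obtain ⟨Φ, hΦ⟩ := ih
    rcases S.eq_empty_or_nonempty with rfl | hne
    · exact ⟨0, by simp⟩
    set p := S.max' hne
    have hpS : p ∈ S := S.max'_mem hne
    have hpm : p ≤ m := (hlt p hpS).le
    -- `Φ m` is the least value the pair `(p, m)` allows; the other new pairs then follow from
    -- monotonicity and the Lipschitz bound.
    refine ⟨Function.update Φ m (Φ p + h p * (m - p) + ξ / 2 * (h m - h p) ^ 2), ?_⟩
    have hne : ∀ b ∈ S, b ≠ m := fun b hb => (hlt b hb).ne
    have hup : ∀ b ∈ S, Φ p + h p * (m - p) + ξ / 2 * (h m - h p) ^ 2 - Φ b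
        + ξ / 2 * (h m - h b) ^ 2 ≤ h m * (m - b) := by
      intro b hb
      have key : 0 ≤ (h m - h p) * ((m - b) - ξ * (h m - h b)) :=
        mul_nonneg (sub_nonneg.2 (hh.monotone hξ hpm))
          (sub_nonneg.2 (hh.mul_sub_le hξ ((S.le_max' b hb).trans hpm)))
      linarith [hΦ p hpS b hb]
    have hdown : ∀ b ∈ S, Φ b - (Φ p + h p * (m - p) + ξ / 2 * (h m - h p) ^ 2)
        + ξ / 2 * (h b - h m) ^ 2 ≤ h b * (b - m) := by
      intro b hb
      have key : 0 ≤ (h p - h b) * ((m - p) - ξ * (h m - h p)) :=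
        mul_nonneg (sub_nonneg.2 (hh.monotone hξ (S.le_max' b hb)))
          (sub_nonneg.2 (hh.mul_sub_le hξ hpm))
      linarith [hΦ b hb p hpS]
    simp only [mem_insert]
    rintro a (rfl | ha) b (rfl | hb)
    · simp
    · simpa [hne b hb] using hup b hb
    · simpa [hne a ha] using hdown a ha
    · simpa [hne a ha, hne b hb] using hΦ a ha b hb

end IsRelaxedCocoercive

section BalancedLaplacian

variable {ι : Type*} [Fintype ι] {L : Matrix ι ι ℝ}

theorem dotProduct_mulVec_eq_sum_sub (hrow : L *ᵥ 1 = 0) (v w : ι → ℝ) :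
    v ⬝ᵥ L *ᵥ w = ∑ i, ∑ j, -L i j * (v i * (w i - w j)) := by
  have hrow' : ∀ i, ∑ j, L i j = 0 := fun i => by simpa [mulVec, dotProduct] using congrFun hrow i
  simp only [dotProduct, mulVec, mul_sum]
  refine sum_congr rfl fun i _ => ?_
  have : ∑ j, L i j * (v i * w i) = 0 := by rw [← sum_mul, hrow' i, zero_mul]
  rw [← sub_zero (∑ j, v i * (L i j * w j)), ← this, ← sum_sub_distrib]
  exact sum_congr rfl fun j _ => by ring

theorem sum_sum_mul_sub_eq_zero (hrow : L *ᵥ 1 = 0) (hcol : 1 ᵥ* L = 0) (f : ι → ℝ) :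
    ∑ i, ∑ j, L i j * (f i - f j) = 0 := by
  have h1 : f ⬝ᵥ L *ᵥ 1 = 0 := by rw [hrow, dotProduct_zero]
  have h2 : 1 ⬝ᵥ L *ᵥ f = 0 := by rw [dotProduct_mulVec, hcol, zero_dotProduct]
  simp only [dotProduct, mulVec, Pi.one_apply, mul_one, one_mul, mul_sum] at h1 h2
  rw [← h1, ← sub_zero (∑ i, ∑ j, f i * L i j), ← h2]
  simp only [mul_sub, sum_sub_distrib, mul_comm]

theorem two_mul_dotProduct_mulVec_self (hrow : L *ᵥ 1 = 0) (hcol : 1 ᵥ* L = 0) (w : ι → ℝ) :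
    2 * (w ⬝ᵥ L *ᵥ w) = ∑ i, ∑ j, -L i j * (w i - w j) ^ 2 := by
  have hw := sum_sum_mul_sub_eq_zero hrow hcol (w ^ 2)
  calc 2 * (w ⬝ᵥ L *ᵥ w)
      = ∑ i, ∑ j, (2 * (-L i j * (w i * (w i - w j))) + L i j * ((w ^ 2) i - (w ^ 2) j)) := by
        simp only [sum_add_distrib, hw, add_zero, mul_sum, dotProduct_mulVec_eq_sum_sub hrow]
    _ = ∑ i, ∑ j, -L i j * (w i - w j) ^ 2 :=
        sum_congr rfl fun i _ => sum_congr rfl fun j _ => by simp only [Pi.pow_apply]; ring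

theorem dotProduct_mulVec_self_nonneg (hoff : ∀ i j, i ≠ j → L i j ≤ 0) (hrow : L *ᵥ 1 = 0)
    (hcol : 1 ᵥ* L = 0) (w : ι → ℝ) : 0 ≤ w ⬝ᵥ L *ᵥ w := by
  have hsum : 0 ≤ ∑ i, ∑ j, -L i j * (w i - w j) ^ 2 := by
    refine sum_nonneg fun i _ => sum_nonneg fun j _ => ?_
    rcases eq_or_ne i j with rfl | hij
    · simp
    · exact mul_nonneg (neg_nonneg.2 (hoff i j hij)) (sq_nonneg _)
  linarith [two_mul_dotProduct_mulVec_self hrow hcol w]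

theorem sub_smul_one_dotProduct_mulVec (hrow : L *ᵥ 1 = 0) (hcol : 1 ᵥ* L = 0) (w : ι → ℝ)
    (c : ℝ) : (w - c • 1) ⬝ᵥ L *ᵥ (w - c • 1) = w ⬝ᵥ L *ᵥ w := by
  rw [mulVec_sub, mulVec_smul, hrow, smul_zero, sub_zero, sub_dotProduct, smul_dotProduct,
    dotProduct_mulVec 1, hcol, zero_dotProduct, smul_zero, sub_zero]

theorem IsRelaxedCocoercive.mul_dotProduct_mulVec_le {ξ : ℝ} {h : ℝ → ℝ}
    (hh : IsRelaxedCocoercive ξ h) (hξ : 0 < ξ) (hoff : ∀ i j, i ≠ j → L i j ≤ 0)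
    (hrow : L *ᵥ 1 = 0) (hcol : 1 ᵥ* L = 0) (x : ι → ℝ) :
    ξ * ((h ∘ x) ⬝ᵥ L *ᵥ (h ∘ x)) ≤ (h ∘ x) ⬝ᵥ L *ᵥ x := by
  obtain ⟨Φ, hΦ⟩ := hh.exists_potential hξ (univ.image x)
  have hΦx := sum_sum_mul_sub_eq_zero hrow hcol (Φ ∘ x)
  have hquad := two_mul_dotProduct_mulVec_self hrow hcol (h ∘ x)
  calc ξ * ((h ∘ x) ⬝ᵥ L *ᵥ (h ∘ x))
      = ∑ i, ∑ j, -L i j * (Φ (x i) - Φ (x j) + ξ / 2 * (h (x i) - h (x j)) ^ 2) := by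
        simp only [Function.comp_apply] at hΦx hquad
        simp only [mul_add, sum_add_distrib, neg_mul (L _ _) (Φ _ - Φ _), sum_neg_distrib, hΦx,
          neg_zero, zero_add, mul_left_comm (-L _ _) (ξ / 2), ← mul_sum, ← hquad]
        ring
    _ ≤ ∑ i, ∑ j, -L i j * (h (x i) * (x i - x j)) := by
        refine sum_le_sum fun i _ => sum_le_sum fun j _ => ?_
        rcases eq_or_ne i j with rfl | hij
        · simp
        · exact mul_le_mul_of_nonneg_left
            (hΦ _ (mem_image_of_mem x (mem_univ i)) _ (mem_image_of_mem x (mem_univ j)))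
            (neg_nonneg.2 (hoff i j hij))
    _ = (h ∘ x) ⬝ᵥ L *ᵥ x := (dotProduct_mulVec_eq_sum_sub hrow _ _).symm

end BalancedLaplacian

theorem algConn_mul_sum_sq_le {n : ℕ} {L : Matrix (Fin n) (Fin n) ℝ}
    (hL : ∀ w, 0 ≤ w ⬝ᵥ L *ᵥ w) {z : Fin n → ℝ} (hz : ∑ i, z i = 0) :
    algConn L * ∑ i, z i ^ 2 ≤ z ⬝ᵥ L *ᵥ z := by
  set s := ∑ i, z i ^ 2
  have hs : 0 ≤ s := sum_nonneg fun i _ => sq_nonneg (z i)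
  rcases hs.eq_or_lt with hs | hs
  · rw [← hs, mul_zero]
    exact hL z
  set c := (Real.sqrt s)⁻¹
  have hc : c ^ 2 = s⁻¹ := by rw [inv_pow, Real.sq_sqrt hs.le]
  have hle : algConn L ≤ (c • z) ⬝ᵥ L *ᵥ (c • z) := by
    refine csInf_le ⟨0, ?_⟩ ⟨c • z, ?_, ?_, rfl⟩
    · rintro r ⟨w, -, -, rfl⟩
      exact hL w
    · simp only [Pi.smul_apply, smul_eq_mul, ← mul_sum, hz, mul_zero]
    · simp only [Pi.smul_apply, smul_eq_mul, mul_pow, ← mul_sum, hc]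
      exact inv_mul_cancel₀ hs.ne'
  rw [mulVec_smul, smul_dotProduct, dotProduct_smul, smul_smul, smul_eq_mul, ← sq, hc] at hle
  calc algConn L * s ≤ s⁻¹ * (z ⬝ᵥ L *ᵥ z) * s := mul_le_mul_of_nonneg_right hle hs.le
    _ = z ⬝ᵥ L *ᵥ z := by rw [mul_comm, ← mul_assoc, mul_inv_cancel₀ hs.ne', one_mul]

theorem centering_mulVec {n : ℕ} (y : Fin n → ℝ) :
    (1 - (n : ℝ)⁻¹ • Matrix.of fun _ _ => (1 : ℝ)) *ᵥ y = y - ((n : ℝ)⁻¹ * ∑ i, y i) • 1 := by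
  rw [sub_mulVec, one_mulVec, smul_mulVec]
  ext i
  simp [mulVec, dotProduct]

theorem sum_sub_mean_smul_one {n : ℕ} (y : Fin n → ℝ) :
    ∑ i, (y - ((n : ℝ)⁻¹ * ∑ i, y i) • 1) i = 0 := by
  rcases eq_or_ne n 0 with rfl | hn
  · simp
  · simp [sum_sub_distrib, hn]

/-- For a balanced Laplacian `L` (nonpositive off-diagonal entries,
`L 1ₙ = 0`, `1ₙᵀ L = 0`) with algebraic connectivity `λ`, and a `ξ`-relaxed
cocoercive function `h` with `ξ > 0`, if `yᵢ = h(xᵢ)` then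
`yᵀ L x ≥ ξ λ ‖P y‖²`, where `P = Iₙ - (1/n) 1ₙ1ₙᵀ`. -/
theorem statement9 {n : ℕ}
    (L : Matrix (Fin n) (Fin n) ℝ)
    (hoff : ∀ i j, i ≠ j → L i j ≤ 0)
    (hrow : L *ᵥ (fun _ => (1 : ℝ)) = 0)
    (hcol : (fun _ => (1 : ℝ)) ᵥ* L = 0)
    (ξ : ℝ) (hξ : 0 < ξ) (h : ℝ → ℝ)
    (hcoco : ∀ a b : ℝ, ξ * (h a - h b) ^ 2 ≤ (a - b) * (h a - h b))
    (x y : Fin n → ℝ) (hxy : ∀ i, y i = h (x i)) :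
    let P : Matrix (Fin n) (Fin n) ℝ :=
      1 - ((n : ℝ)⁻¹) • Matrix.of fun _ _ => (1 : ℝ)
    y ⬝ᵥ (L *ᵥ x) ≥ ξ * algConn L * ∑ i, ((P *ᵥ y) i) ^ 2 := by
  intro P
  obtain rfl : y = h ∘ x := funext hxy
  have hPy : P *ᵥ (h ∘ x) = h ∘ x - ((n : ℝ)⁻¹ * ∑ i, (h ∘ x) i) • 1 := centering_mulVec _
  have hL := dotProduct_mulVec_self_nonneg hoff hrow hcol
  calc ξ * algConn L * ∑ i, ((P *ᵥ (h ∘ x)) i) ^ 2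
      ≤ ξ * ((P *ᵥ (h ∘ x)) ⬝ᵥ L *ᵥ (P *ᵥ (h ∘ x))) := by
        rw [mul_assoc]
        exact mul_le_mul_of_nonneg_left
          (algConn_mul_sum_sq_le hL (hPy ▸ sum_sub_mean_smul_one _)) hξ.le
    _ = ξ * ((h ∘ x) ⬝ᵥ L *ᵥ (h ∘ x)) := by rw [hPy, sub_smul_one_dotProduct_mulVec hrow hcol]
    _ ≤ (h ∘ x) ⬝ᵥ L *ᵥ x := IsRelaxedCocoercive.mul_dotProduct_mulVec_le hcoco hξ hoff hrow hcol x
end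

section
/- Let \tilde{\gamma}_1,...,\tilde{\gamma}_7 > 0 and let E be the 7\times 7 matrix with diagonal entries -\tilde{\gamma}_1,...,-\tilde{\gamma}_7, entries E_{21} = E_{32} = E_{43} = E_{51} = E_{65} = E_{76} = 1, entries E_{14} = E_{17} = -1, and zeros elsewhere (the dissipativity matrix of the branched interconnection in which species 1 feeds two chains 1\to2\to3\to4 and 1\to5\to6\to7, each of whose ends inhibits species 1). If 1/(\tilde{\gamma}_1 \tilde{\gamma}_2 \tilde{\gamma}_3 \tilde{\gamma}_4) + 1/(\tilde{\gamma}_1 \tilde{\gamma}_5 \tilde{\gamma}_6 \tilde{\gamma}_7) < \sec(\pi/4)^4, then E is diagonally stable. In particular, with \tilde{\gamma}_k = \gamma_k + \lambda_k, the condition (1/(\gamma_1+\lambda_1))(\prod_{k=2}^4 1/(\gamma_k+\lambda_k) + \prod_{k=5}^7 1/(\gamma_k+\lambda_k)) < \sec(\pi/4)^4 guarantees diagonal stability of the dissipativity matrix for this branched structure. -/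
open Matrix

/-- A square matrix `E` is diagonally stable if `Eᵀ D + D E < 0` for some positive
diagonal `D`. -/
def DiagStable {N : ℕ} (E : Matrix (Fin N) (Fin N) ℝ) : Prop :=
  ∃ d : Fin N → ℝ, (∀ k, 0 < d k) ∧
    (-(Eᵀ * Matrix.diagonal d + Matrix.diagonal d * E)).PosDef

/-- Dissipativity matrix of the branched interconnection in which species 1 feeds the
two chains `1→2→3→4` and `1→5→6→7`, each of whose ends inhibits species 1. -/
noncomputable def Ebr (g : Fin 7 → ℝ) : Matrix (Fin 7) (Fin 7) ℝ :=
  !![-g 0,     0,     0,    -1,     0,     0,    -1;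
         1, -g 1,     0,     0,     0,     0,     0;
         0,     1, -g 2,     0,     0,     0,     0;
         0,     0,     1, -g 3,     0,     0,     0;
         1,     0,     0,     0, -g 4,     0,     0;
         0,     0,     0,     0,     1, -g 5,     0;
         0,     0,     0,     0,     0,     1, -g 6]

/-!
Split the self-inhibition `g 0` of species 1 between the two feedback cycles `1→2→3→4→1` and
`1→5→6→7→1` in proportion to their loop gains `a = 1/(g₀g₁g₂g₃)` and `b = 1/(g₀g₄g₅g₆)`. Both
resulting 4-cycles then have loop gain `a + b < 4 = sec(π/4)⁴`, so each satisfies the secant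
condition and has a diagonal Lyapunov weight, which can be normalised to `1` at species 1. The
two weights glue to a weight for the branched matrix, whose quadratic form is the sum of the two
cycle forms.

For a single 4-cycle with loop gain `s⁴ < 4`, a diagonal change of variables turns the form into
`h₀ (2‖y‖² - s · 2(y₀y₁ + y₁y₂ + y₂y₃ - y₀y₃))`, and the signed 4-cycle `y₀y₁ + y₁y₂ + y₂y₃ - y₀y₃`
has spectral radius `√2 / 2`, so the form is positive as soon as `s < √2`.
-/

theorem sqrt_two_pow_four : √2 ^ 4 = 4 := by
  rw [show (4 : ℕ) = 2 * 2 from rfl, pow_mul, Real.sq_sqrt zero_le_two]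
  norm_num

theorem two_mul_signedCycle_le (a b c d : ℝ) :
    2 * (a * b + b * c + c * d - a * d) ≤ √2 * (a ^ 2 + b ^ 2 + c ^ 2 + d ^ 2) := by
  have hr : √2 ^ 2 = 2 := Real.sq_sqrt zero_le_two
  have key : √2 * (a ^ 2 + b ^ 2 + c ^ 2 + d ^ 2) - 2 * (a * b + b * c + c * d - a * d)
      = √2 / 2 * ((a - √2 * b + c) ^ 2 + (a - c + √2 * d) ^ 2) := by
    linear_combination (a * b + b * c + c * d - a * d - √2 / 2 * (b ^ 2 + d ^ 2)) * hr
  have : 0 ≤ √2 / 2 * ((a - √2 * b + c) ^ 2 + (a - c + √2 * d) ^ 2) := by positivity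
  linarith

/-- `xᵀ (-(Cᵀ D + D C)) x` for the 4-cycle `C = !![-h₀, 0, 0, -1; 1, -h₁, 0, 0; 0, 1, -h₂, 0;
0, 0, 1, -h₃]` and `D = diagonal d`. -/
def cycleForm (h d x : Fin 4 → ℝ) : ℝ :=
  2 * d 0 * h 0 * x 0 ^ 2 + 2 * d 1 * h 1 * x 1 ^ 2 + 2 * d 2 * h 2 * x 2 ^ 2
    + 2 * d 3 * h 3 * x 3 ^ 2
    - 2 * d 1 * x 0 * x 1 - 2 * d 2 * x 1 * x 2 - 2 * d 3 * x 2 * x 3 + 2 * d 0 * x 0 * x 3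

theorem cycleForm_nonneg {h d : Fin 4 → ℝ} (hpos : ∀ x ≠ 0, 0 < cycleForm h d x)
    (x : Fin 4 → ℝ) : 0 ≤ cycleForm h d x := by
  rcases eq_or_ne x 0 with rfl | hx
  · simp [cycleForm]
  · exact (hpos x hx).le

theorem exists_cycleForm_pos {h : Fin 4 → ℝ} (hpos : ∀ k, 0 < h k)
    (hsec : 1 / (h 0 * h 1 * h 2 * h 3) < 4) :
    ∃ d : Fin 4 → ℝ, d 0 = 1 ∧ (∀ k, 0 < d k) ∧ ∀ x ≠ 0, 0 < cycleForm h d x := by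
  have := hpos 0; have := hpos 1; have := hpos 2; have := hpos 3
  have hp : 0 < h 0 * h 1 * h 2 * h 3 := by positivity
  set s := (1 / (h 0 * h 1 * h 2 * h 3)) ^ ((4 : ℕ) : ℝ)⁻¹ with hs_def
  have hs : 0 < s := by positivity
  have hs4 : s ^ 4 * (h 0 * h 1 * h 2 * h 3) = 1 := by
    rw [hs_def, Real.rpow_inv_natCast_pow (by positivity) (by norm_num), one_div,
      inv_mul_cancel₀ hp.ne']
  have hs2 : s * √2 < 2 := by
    have : s < √2 := by
      refine lt_of_pow_lt_pow_left₀ 4 (by positivity) ?_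
      rwa [sqrt_two_pow_four, hs_def, Real.rpow_inv_natCast_pow (by positivity) (by norm_num)]
    calc s * √2 < √2 * √2 := by gcongr
      _ = 2 := Real.mul_self_sqrt zero_le_two
  -- in the variables `y k = c k * x k` the form becomes a multiple of the signed 4-cycle
  set c : Fin 4 → ℝ := ![1, s * h 1, s ^ 2 * h 1 * h 2, s ^ 3 * h 1 * h 2 * h 3] with hc
  set d : Fin 4 → ℝ := ![1, s ^ 2 * h 0 * h 1, s ^ 4 * h 0 * h 1 ^ 2 * h 2,
    s ^ 6 * h 0 * h 1 ^ 2 * h 2 ^ 2 * h 3] with hd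
  refine ⟨d, rfl, fun k => by fin_cases k <;> simp [hd] <;> positivity, fun x hx => ?_⟩
  set y : Fin 4 → ℝ := fun k => c k * x k
  have hform : cycleForm h d x = h 0 * (2 * (y 0 ^ 2 + y 1 ^ 2 + y 2 ^ 2 + y 3 ^ 2)
      - s * (2 * (y 0 * y 1 + y 1 * y 2 + y 2 * y 3 - y 0 * y 3))) := by
    simp only [cycleForm, hd, y, hc, cons_val_zero, cons_val_one, cons_val, one_mul, mul_one]
    linear_combination (-2 * x 0 * x 3) * hs4
  have hy : 0 < y 0 ^ 2 + y 1 ^ 2 + y 2 ^ 2 + y 3 ^ 2 := by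
    have hc_pos : ∀ k, 0 < c k := fun k => by fin_cases k <;> simp [hc] <;> positivity
    obtain ⟨k, hk⟩ := Function.ne_iff.mp hx
    calc 0 < y k ^ 2 := pow_two_pos_of_ne_zero (mul_ne_zero (hc_pos k).ne' hk)
      _ ≤ ∑ i, y i ^ 2 := Finset.single_le_sum (fun i _ => sq_nonneg (y i)) (Finset.mem_univ k)
      _ = y 0 ^ 2 + y 1 ^ 2 + y 2 ^ 2 + y 3 ^ 2 := Fin.sum_univ_four _
  have hcycle := two_mul_signedCycle_le (y 0) (y 1) (y 2) (y 3)
  rw [hform]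
  refine mul_pos (hpos 0) ?_
  nlinarith [mul_le_mul_of_nonneg_left hcycle hs.le, mul_lt_mul_of_pos_right hs2 hy]

theorem isHermitian_transpose_mul_diagonal_add {n : Type*} [Fintype n] [DecidableEq n]
    (A : Matrix n n ℝ) (d : n → ℝ) : (Aᵀ * diagonal d + diagonal d * A).IsHermitian := by
  simp [IsHermitian, conjTranspose_eq_transpose_of_trivial, transpose_add, transpose_mul, add_comm]

theorem quadForm_Ebr (g x : Fin 7 → ℝ) {dA dB : Fin 4 → ℝ} (hd : dA 0 = dB 0) {a b : ℝ}
    (hab : a + b = g 0) :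
    let d : Fin 7 → ℝ := ![dA 0, dA 1, dA 2, dA 3, dB 1, dB 2, dB 3]
    star x ⬝ᵥ (-((Ebr g)ᵀ * diagonal d + diagonal d * Ebr g)) *ᵥ x
      = cycleForm ![a, g 1, g 2, g 3] dA ![x 0, x 1, x 2, x 3]
        + cycleForm ![b, g 4, g 5, g 6] dB ![x 0, x 4, x 5, x 6] := by
  simp only [dotProduct, Pi.star_apply, star_trivial, mulVec, Ebr, diagonal, Matrix.neg_apply,
    Matrix.add_apply, mul_apply, transpose_apply, of_apply, cons_val', cons_val_fin_one, mul_ite,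
    mul_zero, Finset.sum_ite_eq', Finset.mem_univ, ↓reduceIte, ite_mul, zero_mul,
    Finset.sum_ite_eq, neg_add_rev, Fin.sum_univ_succ, cons_val_zero, cons_val_succ,
    Fin.succ_zero_eq_one, Fin.succ_one_eq_two, Fin.reduceSucc, Finset.univ_unique,
    Fin.default_eq_zero, Finset.sum_singleton, mul_neg, neg_neg, neg_mul, neg_zero, one_mul,
    zero_add, add_zero, mul_one, cycleForm, cons_val_one, cons_val]
  linear_combination (-2 * dA 0 * x 0 ^ 2) * hab + (2 * x 0 * x 6 + 2 * b * x 0 ^ 2) * hd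

theorem diagStable_Ebr {g : Fin 7 → ℝ} (hg : ∀ k, 0 < g k)
    (hsec : 1 / (g 0 * g 1 * g 2 * g 3) + 1 / (g 0 * g 4 * g 5 * g 6) < 4) :
    DiagStable (Ebr g) := by
  set a := 1 / (g 0 * g 1 * g 2 * g 3) with ha
  set b := 1 / (g 0 * g 4 * g 5 * g 6) with hb
  have := hg 0; have := hg 1; have := hg 2; have := hg 3; have := hg 4; have := hg 5
  have := hg 6
  have hab : 0 < a + b := by positivity
  set hA : Fin 4 → ℝ := ![a / (a + b) * g 0, g 1, g 2, g 3]
  set hB : Fin 4 → ℝ := ![b / (a + b) * g 0, g 4, g 5, g 6]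
  have hA_pos : ∀ k, 0 < hA k := fun k => by fin_cases k <;> simp [hA] <;> positivity
  have hB_pos : ∀ k, 0 < hB k := fun k => by fin_cases k <;> simp [hB] <;> positivity
  have hA_gain : 1 / (hA 0 * hA 1 * hA 2 * hA 3) = a + b := by
    simp only [hA, ha, hb, cons_val_zero, cons_val_one, cons_val]
    field_simp
  have hB_gain : 1 / (hB 0 * hB 1 * hB 2 * hB 3) = a + b := by
    simp only [hB, ha, hb, cons_val_zero, cons_val_one, cons_val]
    field_simp
  obtain ⟨dA, hdA0, hdA, hA_form⟩ := exists_cycleForm_pos hA_pos (hA_gain ▸ hsec)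
  obtain ⟨dB, hdB0, hdB, hB_form⟩ := exists_cycleForm_pos hB_pos (hB_gain ▸ hsec)
  refine ⟨![dA 0, dA 1, dA 2, dA 3, dB 1, dB 2, dB 3], ?_, posDef_iff_dotProduct_mulVec.mpr
    ⟨(isHermitian_transpose_mul_diagonal_add _ _).neg, fun x hx => ?_⟩⟩
  · intro k; fin_cases k <;> simp [hdA, hdB]
  rw [quadForm_Ebr g x (hdA0.trans hdB0.symm) (a := a / (a + b) * g 0) (b := b / (a + b) * g 0)
    (by field_simp)]
  by_cases hxA : ![x 0, x 1, x 2, x 3] = 0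
  · have hxB : ![x 0, x 4, x 5, x 6] ≠ 0 := by
      intro hxB
      simp only [cons_eq_zero_iff, zero_empty, and_true] at hxA hxB
      exact hx (by ext k; fin_cases k <;> simp [hxA, hxB])
    exact add_pos_of_nonneg_of_pos (cycleForm_nonneg hA_form _) (hB_form _ hxB)
  · exact add_pos_of_pos_of_nonneg (hA_form _ hxA) (cycleForm_nonneg hB_form _)

theorem one_div_cos_pi_div_four_pow_four : (1 / Real.cos (Real.pi / 4)) ^ 4 = 4 := by
  rw [Real.cos_pi_div_four, one_div_div, div_pow, sqrt_two_pow_four]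
  norm_num

/-- If `γ̃ₖ > 0` and
`1/(γ̃₁γ̃₂γ̃₃γ̃₄) + 1/(γ̃₁γ̃₅γ̃₆γ̃₇) < sec(π/4)⁴`, then the branched dissipativity
matrix is diagonally stable; in particular with `γ̃ₖ = γₖ + λₖ`. -/
theorem statement13 :
    (∀ g : Fin 7 → ℝ, (∀ k, 0 < g k) →
      1 / (g 0 * g 1 * g 2 * g 3) + 1 / (g 0 * g 4 * g 5 * g 6)
          < (1 / Real.cos (Real.pi / 4)) ^ 4 →
      DiagStable (Ebr g)) ∧
    (∀ γ lam : Fin 7 → ℝ, (∀ k, 0 < γ k + lam k) →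
      (1 / (γ 0 + lam 0)) *
          (1 / ((γ 1 + lam 1) * (γ 2 + lam 2) * (γ 3 + lam 3))
            + 1 / ((γ 4 + lam 4) * (γ 5 + lam 5) * (γ 6 + lam 6)))
          < (1 / Real.cos (Real.pi / 4)) ^ 4 →
      DiagStable (Ebr fun k => γ k + lam k)) := by
  rw [one_div_cos_pi_div_four_pow_four]
  refine ⟨fun g hg hsec => diagStable_Ebr hg hsec, fun γ lam hpos hsec => diagStable_Ebr hpos ?_⟩
  convert hsec using 1
  simp only [one_div, mul_inv]
  ring
end
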